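/- arXiv:1604.02514 — 4 statements merged into one kernel-verified Lean document; each statement's English description precedes it below -/
import Mathlib

section
/- Let (T,Σ,μ) be a probability space, E a Banach space, and C a weakly* closed convex subset of the dual space E*. If f : T → E* is a Gelfand integrable function with f(t) ∈ C for all t ∈ T, then the Gelfand integral ∫_T f dμ belongs to C. -/
open MeasureTheory

section Aux

variable {E : Type*} [NormedAddCommGroup E] [NormedSpace ℝ E]

/-- Evaluation at a point `x : E` as a linear functional on the weak-star dual. -/
noncomputable def evalLin (x : E) : WeakDual ℝ E →ₗ[ℝ] ℝ where
  toFun y := y x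
  map_add' a b := rfl
  map_smul' c a := rfl

/-- Every continuous linear functional on the weak-star dual is evaluation at a point of `E`. -/
lemma weakDual_clm_exists_eval (φ : WeakDual ℝ E →L[ℝ] ℝ) :
    ∃ x : E, ∀ y : WeakDual ℝ E, φ y = y x := by
  have h0 : φ ⁻¹' (Set.Ioo (-1 : ℝ) 1) ∈ nhds (0 : WeakDual ℝ E) := by
    have := φ.continuous.tendsto (0 : WeakDual ℝ E)
    rw [map_zero] at this
    exact this (isOpen_Ioo.mem_nhds (by norm_num))
  have h0' : φ ⁻¹' (Set.Ioo (-1 : ℝ) 1) ∈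
      Filter.comap (fun (y : WeakDual ℝ E) (x : E) => y x) (nhds (fun _ => (0 : ℝ))) := by
    have hnhds : nhds (0 : WeakDual ℝ E) =
        Filter.comap (fun (y : WeakDual ℝ E) (x : E) => y x) (nhds (fun _ => (0 : ℝ))) :=
      nhds_induced _ _
    rwa [hnhds] at h0
  obtain ⟨S, hS⟩ := Filter.mem_comap.mp h0'
  obtain ⟨hSmem, hSsub⟩ := hS
  rw [nhds_pi] at hSmem
  obtain ⟨I, V, hV, hIV⟩ := Filter.mem_pi'.mp hSmem
  -- the intersection of kernels of evaluations at points of `I` is contained in `ker φ`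
  have hker : ⨅ i : I, LinearMap.ker (evalLin (E := E) (i : E)) ≤ LinearMap.ker φ.toLinearMap := by
    intro y hy
    simp only [Submodule.mem_iInf, LinearMap.mem_ker] at hy
    have key : ∀ c : ℝ, φ (c • y) ∈ Set.Ioo (-1 : ℝ) 1 := by
      intro c
      apply hSsub
      apply hIV
      intro i hi
      have : (c • y) i = 0 := by
        have hyi : y i = 0 := hy ⟨i, hi⟩
        show c * y i = 0
        rw [hyi, mul_zero]
      show (c • y) i ∈ V i
      rw [this]
      exact mem_of_mem_nhds (hV i)
    rw [LinearMap.mem_ker]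
    by_contra hne
    have h2 := key (2 / φ y)
    rw [_root_.map_smul, smul_eq_mul, div_mul_cancel₀ _ (by exact_mod_cast hne)] at h2
    exact absurd h2.2 (by norm_num)
  have hspan : φ.toLinearMap ∈ Submodule.span ℝ
      (Set.range fun i : I => evalLin (E := E) (i : E)) :=
    mem_span_of_iInf_ker_le_ker hker
  obtain ⟨c, hc⟩ := (Submodule.mem_span_range_iff_exists_fun ℝ).mp hspan
  refine ⟨∑ i : I, c i • (i : E), fun y => ?_⟩
  have := congrArg (fun L : WeakDual ℝ E →ₗ[ℝ] ℝ => L y) hc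
  simp only [LinearMap.coe_sum, Finset.sum_apply, LinearMap.smul_apply] at this
  rw [ContinuousLinearMap.coe_coe] at this
  rw [← this]
  rw [map_sum]
  refine Finset.sum_congr rfl fun i _ => ?_
  show c i * y (i : E) = y (c i • (i : E))
  rw [_root_.map_smul, smul_eq_mul]

end Aux

/-- Let `(T,Σ,μ)` be a probability space, `E` a Banach space, and `C` a
weakly* closed convex subset of the dual `E*` (modeled as `WeakDual ℝ E`). If `f : T → E*`
is Gelfand integrable with values in `C`, then its Gelfand integral belongs to `C`. -/
theorem stmt0 {T : Type*} [MeasurableSpace T] (μ : Measure T) [IsProbabilityMeasure μ]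
    {E : Type*} [NormedAddCommGroup E] [NormedSpace ℝ E] [CompleteSpace E]
    (C : Set (WeakDual ℝ E)) (hCclosed : IsClosed C) (hCconv : Convex ℝ C)
    (f : T → WeakDual ℝ E)
    (hf_int : ∀ x : E, Integrable (fun t => f t x) μ)
    (g : WeakDual ℝ E) (hg : ∀ x : E, g x = ∫ t, f t x ∂μ)
    (hfC : ∀ t, f t ∈ C) : g ∈ C := by
  haveI : LocallyConvexSpace ℝ (WeakDual ℝ E) := WeakBilin.locallyConvexSpace
  haveI : IsTopologicalAddGroup (WeakDual ℝ E) := WeakDual.instIsTopologicalAddGroup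
  by_contra hgC
  obtain ⟨φ, u, hu, hgu⟩ := geometric_hahn_banach_closed_point hCconv hCclosed hgC
  obtain ⟨x, hx⟩ := weakDual_clm_exists_eval φ
  -- φ g = g x = ∫ f t x ≤ ... < u, contradiction with u < φ g
  have hle : ∀ t, f t x < u := fun t => by rw [← hx (f t)]; exact hu (f t) (hfC t)
  have : g x ≤ u := by
    rw [hg x]
    calc ∫ t, f t x ∂μ ≤ ∫ _t, u ∂μ :=
          integral_mono (hf_int x) (integrable_const u) fun t => (hle t).le
      _ = u := by simp
  rw [← hx g] at this
  exact absurd hgu (not_lt.mpr this)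
end

section
/- Let (T,Σ,μ) be a finite measure space, E a separable Banach space, X a Polish space, and Φ : T × X → E* an integrably bounded measurable function such that Φ(t,·) : X → E* is weak*-continuous for every t ∈ T. If a sequence {λ_i} of measurable maps T → Π(X) (relaxed controls) converges weakly to λ (i.e., ∫_T ∫_X ψ(t,x) λ_i(t,dx) dμ → ∫_T ∫_X ψ(t,x) λ(t,dx) dμ for every integrably bounded Carathéodory integrand ψ), then the Gelfand integrals I_Φ(λ_i) = ∫_T ∫_X Φ(t,x) λ_i(t,dx) dμ converge to I_Φ(λ) in the weak* topology of E*. -/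
open MeasureTheory Filter

/-- Let `Φ : T × X → E*` be integrably bounded, measurable, and weak*
continuous in `x`. If a sequence of relaxed controls `λ_i : T → Π(X)` converges weakly to
`λ` (integral functionals of all integrably bounded Carathéodory integrands converge),
then the Gelfand integrals `I_Φ(λ_i) = ∫_T ∫_X Φ(t,x) λ_i(t,dx) dμ` converge to `I_Φ(λ)`
in the weak* topology of `E*`, i.e. tested against every `y ∈ E`. -/
theorem stmt5 {T : Type*} [MeasurableSpace T] (μ : Measure T) [IsFiniteMeasure μ]
    {E : Type*} [NormedAddCommGroup E] [NormedSpace ℝ E]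
    [TopologicalSpace.SeparableSpace E] [CompleteSpace E]
    {X : Type*} [TopologicalSpace X] [PolishSpace X] [MeasurableSpace X] [BorelSpace X]
    [MeasurableSpace (WeakDual ℝ E)] [BorelSpace (WeakDual ℝ E)]
    (Φ : T → X → WeakDual ℝ E)
    (hΦmeas : Measurable fun p : T × X => Φ p.1 p.2)
    (hΦcont : ∀ t, Continuous fun x => Φ t x)
    (φ₀ : T → ℝ) (hφ₀ : Integrable φ₀ μ)
    (hΦbd : ∀ t x (y : E), |Φ t x y| ≤ φ₀ t * ‖y‖)
    (lam : ℕ → T → Measure X) (lamLim : T → Measure X)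
    (hlam_prob : ∀ i t, IsProbabilityMeasure (lam i t))
    (hlamLim_prob : ∀ t, IsProbabilityMeasure (lamLim t))
    (hlam_meas : ∀ i, ∀ s : Set X, MeasurableSet s → Measurable fun t => lam i t s)
    (hlamLim_meas : ∀ s : Set X, MeasurableSet s → Measurable fun t => lamLim t s)
    (hweak : ∀ ψ : T → X → ℝ,
      Measurable (fun p : T × X => ψ p.1 p.2) → (∀ t, Continuous fun x => ψ t x) →
      (∃ ψ₀ : T → ℝ, Integrable ψ₀ μ ∧ ∀ t x, |ψ t x| ≤ ψ₀ t) →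
      Tendsto (fun i => ∫ t, ∫ x, ψ t x ∂(lam i t) ∂μ) atTop
        (nhds (∫ t, ∫ x, ψ t x ∂(lamLim t) ∂μ))) :
    ∀ y : E,
      Tendsto (fun i => ∫ t, ∫ x, Φ t x y ∂(lam i t) ∂μ) atTop
        (nhds (∫ t, ∫ x, Φ t x y ∂(lamLim t) ∂μ)) := by
  intro y
  have heval : Continuous fun f : WeakDual ℝ E => f y := WeakDual.eval_continuous y
  exact hweak (fun t x => Φ t x y)
    (heval.measurable.comp hΦmeas)
    (fun t => heval.comp (hΦcont t))
    ⟨fun t => φ₀ t * ‖y‖, hφ₀.mul_const _, fun t x => hΦbd t x y⟩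
end

section
/- Let X be a compact Polish space and (T,Σ,μ) a finite measure space. If a sequence of relaxed controls {λ_i} in R(T,X) converges weakly to λ and each λ_i is concentrated on a closed-valued multifunction U : T ⇉ X with measurable graph (i.e., λ_i(t)(U(t)) = 1 a.e. t), then λ is also concentrated on U. -/
open MeasureTheory Filter Set Metric TopologicalSpace

/-- `X` compact Polish, `(T,Σ,μ)` finite measure space. If relaxed controls
`λ_i` converge weakly to `λ` and each `λ_i` is concentrated on a closed-valued
multifunction `U` with measurable graph (`λ_i(t)(U(t)) = 1` a.e.), then `λ` is also
concentrated on `U`. -/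
theorem stmt6 {T : Type*} [MeasurableSpace T] (μ : Measure T) [IsFiniteMeasure μ]
    {X : Type*} [TopologicalSpace X] [PolishSpace X] [CompactSpace X]
    [MeasurableSpace X] [BorelSpace X]
    (U : T → Set X) (hUclosed : ∀ t, IsClosed (U t))
    (hUgraph : MeasurableSet {p : T × X | p.2 ∈ U p.1})
    (lam : ℕ → T → Measure X) (lamLim : T → Measure X)
    (hlam_prob : ∀ i t, IsProbabilityMeasure (lam i t))
    (hlamLim_prob : ∀ t, IsProbabilityMeasure (lamLim t))
    (hlam_meas : ∀ i, ∀ s : Set X, MeasurableSet s → Measurable fun t => lam i t s)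
    (hlamLim_meas : ∀ s : Set X, MeasurableSet s → Measurable fun t => lamLim t s)
    (hweak : ∀ ψ : T → X → ℝ,
      Measurable (fun p : T × X => ψ p.1 p.2) → (∀ t, Continuous fun x => ψ t x) →
      (∃ ψ₀ : T → ℝ, Integrable ψ₀ μ ∧ ∀ t x, |ψ t x| ≤ ψ₀ t) →
      Tendsto (fun i => ∫ t, ∫ x, ψ t x ∂(lam i t) ∂μ) atTop
        (nhds (∫ t, ∫ x, ψ t x ∂(lamLim t) ∂μ)))
    (hconc : ∀ i, ∀ᵐ t ∂μ, lam i t (U t) = 1) :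
    ∀ᵐ t ∂μ, lamLim t (U t) = 1 := by
  -- trivial case `T` empty
  rcases isEmpty_or_nonempty T with hT | hT
  · exact Eventually.of_forall fun t => isEmptyElim t
  -- `X` is nonempty
  have hX : Nonempty X := by
    by_contra h
    rw [not_nonempty_iff] at h
    have h1 := (hlamLim_prob (Classical.arbitrary T)).measure_univ
    rw [Set.univ_eq_empty_iff.2 h, measure_empty] at h1
    exact zero_ne_one h1
  letI := upgradeIsCompletelyMetrizable X
  -- sections of `U` are measurable
  have hUm : ∀ t, MeasurableSet (U t) := fun t =>
    hUgraph.preimage measurable_prodMk_left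
  -- enumerate a countable basis (with ∅ inserted to ensure nonemptiness)
  obtain ⟨B, hBrange⟩ :=
    ((countable_countableBasis X).insert ∅).exists_eq_range (insert_nonempty _ _)
  have hBopen : ∀ m, IsOpen (B m) := by
    intro m
    have hmem : B m ∈ insert (∅ : Set X) (countableBasis X) := by
      rw [hBrange]; exact mem_range_self m
    rcases (mem_insert_iff.1 hmem) with h | h
    · rw [h]; exact isOpen_empty
    · exact isOpen_of_mem_countableBasis h
  have hBbasis : ∀ {x : X} {O : Set X}, IsOpen O → x ∈ O → ∃ m, x ∈ B m ∧ B m ⊆ O := by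
    intro x O hO hxO
    obtain ⟨b, hb, hxb, hbO⟩ :=
      (isBasis_countableBasis X).exists_subset_of_mem_open hxO hO
    have : b ∈ range B := by rw [← hBrange]; exact mem_insert_of_mem _ hb
    obtain ⟨m, rfl⟩ := this
    exact ⟨m, hxb, hbO⟩
  -- the common "support" multifunction
  set N : T → Set ℕ := fun t => {m | ∀ i, lam i t (B m) = 0} with hN
  set V : T → Set X := fun t => (⋃ m ∈ N t, B m)ᶜ with hV
  have hVclosed : ∀ t, IsClosed (V t) :=
    fun t => (isOpen_biUnion fun m _ => hBopen m).isClosed_compl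
  have hVnull : ∀ i t, lam i t (V t)ᶜ = 0 := by
    intro i t
    rw [hV]
    simp only [compl_compl]
    exact (measure_biUnion_null_iff (Set.to_countable _)).2 fun m hm => hm i
  have hVone : ∀ i t, lam i t (V t) = 1 := fun i t =>
    haveI := hlam_prob i t
    (prob_compl_eq_zero_iff (hVclosed t).measurableSet).1 (hVnull i t)
  have hVne : ∀ t, (V t).Nonempty := by
    intro t
    rw [nonempty_iff_ne_empty]
    intro h
    have h1 := hVone 0 t
    rw [h, measure_empty] at h1
    exact zero_ne_one h1
  -- a.e., `V t ⊆ U t`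
  have hVsubU : ∀ t, (∀ i, lam i t (U t) = 1) → V t ⊆ U t := by
    intro t ht x hx
    by_contra hxU
    obtain ⟨m, hxm, hmsub⟩ := hBbasis (hUclosed t).isOpen_compl hxU
    have hmN : m ∈ N t := by
      intro i
      haveI := hlam_prob i t
      refine measure_mono_null hmsub ?_
      exact (prob_compl_eq_zero_iff (hUm t)).2 (ht i)
    exact hx (mem_biUnion hmN hxm)
  -- a dense sequence
  set d : ℕ → X := denseSeq X with hd_def
  have hd : DenseRange d := denseRange_denseSeq X
  -- measurability of `t ↦ infDist (d n) (V t)`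
  have hmeas_inf : ∀ n : ℕ, Measurable fun t => infDist (d n) (V t) := by
    intro n
    apply measurable_of_Iio
    intro r
    rcases le_or_gt r 0 with hr | hr
    · have hempty : (fun t => infDist (d n) (V t)) ⁻¹' Iio r = ∅ := by
        ext t
        simp only [mem_preimage, mem_Iio, mem_empty_iff_false, iff_false, not_lt]
        exact le_trans hr infDist_nonneg
      rw [hempty]; exact MeasurableSet.empty
    · have hset : (fun t => infDist (d n) (V t)) ⁻¹' Iio r
          = ⋃ i, {t | lam i t (Metric.ball (d n) r) ≠ 0} := by
        ext t
        simp only [mem_preimage, mem_Iio, mem_iUnion, mem_setOf_eq]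
        constructor
        · intro hlt
          obtain ⟨y, hyV, hyd⟩ := (infDist_lt_iff (hVne t)).1 hlt
          have hyball : y ∈ Metric.ball (d n) r := by
            rw [Metric.mem_ball, dist_comm]; exact hyd
          obtain ⟨m, hym, hmsub⟩ := hBbasis Metric.isOpen_ball hyball
          have hnot : ¬ ∀ i, lam i t (B m) = 0 := by
            intro hall
            exact hyV (mem_biUnion hall hym)
          push_neg at hnot
          obtain ⟨i, hi⟩ := hnot
          exact ⟨i, fun h0 => hi (measure_mono_null hmsub h0)⟩
        · rintro ⟨i, hi⟩
          have hball : lam i t (Metric.ball (d n) r ∩ V t) ≠ 0 := by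
            intro h0
            apply hi
            have hsub : Metric.ball (d n) r ⊆ (Metric.ball (d n) r ∩ V t) ∪ (V t)ᶜ := by
              intro y hy
              by_cases hyV : y ∈ V t
              · exact Or.inl ⟨hy, hyV⟩
              · exact Or.inr hyV
            refine le_antisymm ?_ (zero_le)
            calc lam i t (Metric.ball (d n) r)
                ≤ lam i t ((Metric.ball (d n) r ∩ V t) ∪ (V t)ᶜ) := measure_mono hsub
              _ ≤ lam i t (Metric.ball (d n) r ∩ V t) + lam i t (V t)ᶜ := measure_union_le _ _
              _ = 0 := by rw [h0, hVnull i t, add_zero]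
          obtain ⟨y, hy⟩ := nonempty_of_measure_ne_zero hball
          calc infDist (d n) (V t) ≤ dist (d n) y := infDist_le_dist_of_mem hy.2
            _ < r := by rw [dist_comm]; exact hy.1
      rw [hset]
      refine MeasurableSet.iUnion fun i => ?_
      exact (hlam_meas i _ measurableSet_ball) (measurableSet_singleton 0).compl
  -- the Carathéodory integrand
  set g : T → X → ℝ := fun t x => ⨅ n, (dist x (d n) + infDist (d n) (V t)) with hgdef
  have hbdd : ∀ t x, BddBelow (range fun n => dist x (d n) + infDist (d n) (V t)) := by
    intro t x
    refine ⟨0, ?_⟩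
    rintro _ ⟨n, rfl⟩
    have := infDist_nonneg (x := d n) (s := V t)
    have := dist_nonneg (x := x) (y := d n)
    positivity
  have hg : ∀ t x, g t x = infDist x (V t) := by
    intro t x
    apply le_antisymm
    · by_contra hcon
      push_neg at hcon
      set ε := (g t x - infDist x (V t)) / 3 with hε
      have hεpos : 0 < ε := by simp only [hε]; linarith
      obtain ⟨n, hn⟩ := Metric.denseRange_iff.1 hd x ε hεpos
      have h1 : g t x ≤ dist x (d n) + infDist (d n) (V t) := ciInf_le (hbdd t x) n
      have h2 : infDist (d n) (V t) ≤ infDist x (V t) + dist (d n) x :=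
        infDist_le_infDist_add_dist
      rw [dist_comm (d n) x] at h2
      linarith
    · refine le_ciInf fun n => ?_
      calc infDist x (V t) ≤ infDist (d n) (V t) + dist x (d n) := infDist_le_infDist_add_dist
        _ = dist x (d n) + infDist (d n) (V t) := add_comm _ _
  set ψ : T → X → ℝ := fun t x => min (g t x) 1 with hψdef
  have hψmeas : Measurable fun p : T × X => ψ p.1 p.2 := by
    refine Measurable.min ?_ measurable_const
    exact Measurable.iInf fun n =>
      (measurable_snd.dist measurable_const).add ((hmeas_inf n).comp measurable_fst)
  have hψcont : ∀ t, Continuous fun x => ψ t x := by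
    intro t
    have heq : (fun x => ψ t x) = fun x => min (infDist x (V t)) 1 := by
      funext x
      simp only [hψdef, hg t x]
    rw [heq]
    exact (continuous_infDist_pt _).min continuous_const
  have hψ0 : ∀ t x, 0 ≤ ψ t x := by
    intro t x
    refine le_min ?_ zero_le_one
    rw [hg]; exact infDist_nonneg
  have hψ1 : ∀ t x, ψ t x ≤ 1 := fun t x => min_le_right _ _
  have hψzero : ∀ t x, x ∈ V t → ψ t x = 0 := by
    intro t x hx
    simp only [hψdef, hg t x, infDist_zero_of_mem hx]
    exact min_eq_left zero_le_one
  -- weak convergence applied to ψ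
  have hconv := hweak ψ hψmeas hψcont
    ⟨fun _ => 1, integrable_const 1, fun t x => by
      show |ψ t x| ≤ 1
      rw [abs_le]
      exact ⟨by linarith [hψ0 t x], hψ1 t x⟩⟩
  have hzero : ∀ i, ∫ t, ∫ x, ψ t x ∂(lam i t) ∂μ = 0 := by
    intro i
    have hin : ∀ t, ∫ x, ψ t x ∂(lam i t) = 0 := by
      intro t
      apply integral_eq_zero_of_ae
      rw [Filter.EventuallyEq, ae_iff]
      refine measure_mono_null ?_ (hVnull i t)
      intro x hx
      simp only [mem_setOf_eq, Pi.zero_apply] at hx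
      intro hxV
      exact hx (hψzero t x hxV)
    simp only [hin, integral_zero]
  have hlimeq : ∫ t, ∫ x, ψ t x ∂(lamLim t) ∂μ = 0 := by
    refine tendsto_nhds_unique hconv ?_
    simp only [hzero]
    exact tendsto_const_nhds
  -- integrability facts
  have hψint : ∀ t, Integrable (fun x => ψ t x) (lamLim t) := by
    intro t
    haveI := hlamLim_prob t
    refine (integrable_const (1 : ℝ)).mono' (hψcont t).aestronglyMeasurable ?_
    refine Eventually.of_forall fun x => ?_
    rw [Real.norm_eq_abs, abs_le]
    exact ⟨by linarith [hψ0 t x], hψ1 t x⟩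
  -- the kernel given by lamLim, for measurability of the inner integral
  set κ : ProbabilityTheory.Kernel T X :=
    ⟨lamLim, Measure.measurable_of_measurable_coe _ hlamLim_meas⟩ with hκdef
  haveI : ProbabilityTheory.IsMarkovKernel κ := ⟨hlamLim_prob⟩
  have hFmeas : StronglyMeasurable fun t => ∫ x, ψ t x ∂(lamLim t) := by
    have h := MeasureTheory.StronglyMeasurable.integral_kernel_prod_right
      (κ := κ) (f := ψ) hψmeas.stronglyMeasurable
    exact h
  have hFnonneg : ∀ t, 0 ≤ ∫ x, ψ t x ∂(lamLim t) :=
    fun t => integral_nonneg fun x => hψ0 t x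
  have hFint : Integrable (fun t => ∫ x, ψ t x ∂(lamLim t)) μ := by
    refine (integrable_const (1 : ℝ)).mono' hFmeas.aestronglyMeasurable ?_
    refine Eventually.of_forall fun t => ?_
    rw [Real.norm_eq_abs, abs_le]
    constructor
    · linarith [hFnonneg t]
    · haveI := hlamLim_prob t
      calc ∫ x, ψ t x ∂(lamLim t) ≤ ∫ _x, (1 : ℝ) ∂(lamLim t) :=
            integral_mono (hψint t) (integrable_const 1) fun x => hψ1 t x
        _ = 1 := by simp
  have hFae : (fun t => ∫ x, ψ t x ∂(lamLim t)) =ᵐ[μ] 0 :=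
    (integral_eq_zero_iff_of_nonneg (fun t => hFnonneg t) hFint).1 hlimeq
  have hae_all : ∀ᵐ t ∂μ, ∀ i, lam i t (U t) = 1 := ae_all_iff.2 hconc
  filter_upwards [hFae, hae_all] with t hFt hUt
  have hFt' : ∫ x, ψ t x ∂(lamLim t) = 0 := hFt
  have hψae : (fun x => ψ t x) =ᵐ[lamLim t] 0 :=
    (integral_eq_zero_iff_of_nonneg (fun x => hψ0 t x) (hψint t)).1 hFt'
  have hcompl : lamLim t (V t)ᶜ = 0 := by
    rw [Filter.EventuallyEq, ae_iff] at hψae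
    refine measure_mono_null ?_ hψae
    intro x hx
    simp only [mem_setOf_eq, Pi.zero_apply]
    intro h0
    have hpos : 0 < infDist x (V t) :=
      ((hVclosed t).notMem_iff_infDist_pos (hVne t)).1 hx
    have hψx : ψ t x = min (infDist x (V t)) 1 := by simp only [hψdef, hg t x]
    rw [hψx] at h0
    have : 0 < min (infDist x (V t)) 1 := lt_min hpos one_pos
    rw [h0] at this
    exact lt_irrefl 0 this
  haveI := hlamLim_prob t
  have hV1 : lamLim t (V t) = 1 :=
    (prob_compl_eq_zero_iff (hVclosed t).measurableSet).1 hcompl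
  exact le_antisymm prob_le_one (le_trans (le_of_eq hV1.symm) (measure_mono (hVsubU t hUt)))
end

section
/- Let (T,Σ,μ) be a complete finite measure space, E a separable Banach space, and Γ : T ⇉ E* an integrably bounded multifunction with nonempty values and graph in Σ ⊗ Borel(E*, w*). Then the set S¹_Γ of Gelfand integrable selectors of Γ is nonempty. -/
open MeasureTheory

open Filter Set Topology
open scoped ENNReal

namespace Stmt11Aux

/-- cylinder determined by a finite list -/
def cyl (s : List ℕ) : Set (ℕ → ℕ) := {σ | ∀ i, (h : i < s.length) → σ i = s[i]}

lemma cyl_nil : cyl [] = univ := by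
  ext σ; simp [cyl]

lemma isClosed_cyl (s : List ℕ) : IsClosed (cyl s) := by
  have : cyl s = ⋂ (i : ℕ) (h : i < s.length), {σ : ℕ → ℕ | σ i = s[i]} := by
    ext σ; simp [cyl]
  rw [this]
  exact isClosed_iInter fun i => isClosed_iInter fun h =>
    isClosed_eq (continuous_apply i) continuous_const

lemma mem_cyl_concat {s : List ℕ} {k : ℕ} {σ : ℕ → ℕ} :
    σ ∈ cyl (s ++ [k]) ↔ σ ∈ cyl s ∧ σ s.length = k := by
  constructor
  · intro h
    refine ⟨fun i hi => ?_, ?_⟩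
    · have := h i (by simpa using Nat.lt_succ_of_lt hi)
      rwa [List.getElem_append_left hi] at this
    · have := h s.length (by simp)
      rw [List.getElem_concat_length rfl] at this
      exact this
  · rintro ⟨h1, h2⟩ i hi
    rcases lt_or_eq_of_le (Nat.lt_succ_iff.1 (by simpa using hi)) with hlt | heq
    · rw [List.getElem_append_left hlt]; exact h1 i hlt
    · subst heq; rw [List.getElem_concat_length rfl]; exact h2

lemma cyl_concat (s : List ℕ) : cyl s = ⋃ k, cyl (s ++ [k]) := by
  ext σ
  simp only [mem_iUnion, mem_cyl_concat]
  exact ⟨fun h => ⟨σ s.length, h, rfl⟩, fun ⟨k, h, _⟩ => h⟩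

/-- Lemma A: ultrafilter limit argument. -/
lemma subset_image_iInter
    {X : Type*} [TopologicalSpace X] [T2Space X]
    {η : (ℕ → ℕ) → X} (hη : Continuous η)
    {S : ℕ → Set (ℕ → ℕ)} (hanti : Antitone S) (hcl : ∀ n, IsClosed (S n))
    {b : ℕ → ℕ} (hb : ∀ m, ∀ σ ∈ S (m + 1), σ m ≤ b m)
    {z : X} (hz : ∀ n, z ∈ closure (η '' S n)) :
    ∃ σ ∈ ⋂ n, S n, η σ = z := by
  -- the filter
  set F : Filter (ℕ → ℕ) := (⨅ n, 𝓟 (S n)) ⊓ comap η (𝓝 z) with hF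
  have hdir : Directed (· ≥ ·) S := hanti.directed_ge
  have hbas : (⨅ n, 𝓟 (S n)).HasBasis (fun _ => True) S :=
    hasBasis_iInf_principal hdir
  have hbas2 : F.HasBasis (fun i : ℕ × Set X => i.2 ∈ 𝓝 z)
      (fun i => S i.1 ∩ η ⁻¹' i.2) := by
    have := hbas.inf ((𝓝 z).basis_sets.comap η)
    simpa using this
  have hne : F.NeBot := by
    rw [hbas2.neBot_iff]
    rintro ⟨n, U⟩ hU
    have := hz n
    rcases mem_closure_iff_nhds.1 this U hU with ⟨x, hxU, σ, hσS, hσx⟩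
    exact ⟨σ, hσS, by simpa [hσx] using hxU⟩
  set U := Ultrafilter.of F with hU
  have hUF : (U : Filter (ℕ → ℕ)) ≤ F := Ultrafilter.of_le F
  have hSU : ∀ n, S n ∈ U := by
    intro n
    apply hUF
    have h1 : F ≤ 𝓟 (S n) := le_trans inf_le_left (iInf_le _ n)
    exact h1 (mem_principal_self (S n))
  -- coordinatewise limits
  have hvex : ∀ m, ∃ v, v ≤ b m ∧ {σ : ℕ → ℕ | σ m = v} ∈ U := by
    intro m
    have hmem : (fun σ : ℕ → ℕ => σ m) ⁻¹' (Iic (b m)) ∈ U :=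
      U.toFilter.sets_of_superset (hSU (m + 1)) (fun σ hσ => hb m σ hσ)
    have : Iic (b m) ∈ U.map (fun σ : ℕ → ℕ => σ m) := hmem
    rcases Ultrafilter.eq_pure_of_finite_mem (finite_Iic (b m)) this with ⟨v, hv, hpure⟩
    refine ⟨v, hv, ?_⟩
    have : {v} ∈ U.map (fun σ : ℕ → ℕ => σ m) := by rw [hpure]; exact rfl
    simpa [Set.preimage, Set.mem_singleton_iff] using this
  choose v hvle hvU using hvex
  have htendsto : Tendsto id (U : Filter (ℕ → ℕ)) (𝓝 v) := by
    rw [tendsto_pi_nhds]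
    intro m
    have : ∀ᶠ σ in (U : Filter (ℕ → ℕ)), σ m = v m := hvU m
    exact Tendsto.congr' (this.mono fun σ h => h.symm) tendsto_const_nhds
  have hvmem : ∀ n, v ∈ S n := by
    intro n
    have : v ∈ closure (S n) :=
      mem_closure_iff_ultrafilter.2 ⟨U, hSU n, htendsto⟩
    rwa [(hcl n).closure_eq] at this
  refine ⟨v, mem_iInter.2 hvmem, ?_⟩
  have h1 : Tendsto η (U : Filter (ℕ → ℕ)) (𝓝 (η v)) :=
    (hη.tendsto v).comp htendsto
  have h2 : Tendsto η (U : Filter (ℕ → ℕ)) (𝓝 z) := by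
    calc Filter.map η (U : Filter (ℕ → ℕ)) ≤ Filter.map η F := map_mono hUF
    _ ≤ Filter.map η (comap η (𝓝 z)) := map_mono inf_le_right
    _ ≤ 𝓝 z := map_comap_le
  exact tendsto_nhds_unique h1 h2


section
variable {T : Type*} [MeasurableSpace T] (μ : Measure T) [IsFiniteMeasure μ]
variable {h : T → (ℕ → ℕ)} {η : (ℕ → ℕ) → (ℕ → ℕ)}

lemma exists_le_add {a : ℝ≥0∞} (ha : a ≠ ⊤) {f : ℕ → ℝ≥0∞} (hle : a ≤ ⨆ K, f K)
    {δ : ℝ≥0∞} (hδ : 0 < δ) : ∃ K, a ≤ f K + δ := by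
  rcases le_or_gt a δ with hle' | hlt
  · exact ⟨0, le_add_of_nonneg_of_le zero_le hle'⟩
  · have h1 : a - δ < a := ENNReal.sub_lt_self ha (lt_trans hδ hlt).ne' hδ.ne'
    rcases lt_iSup_iff.1 (lt_of_lt_of_le h1 hle) with ⟨K, hK⟩
    refine ⟨K, ?_⟩
    calc a = a - δ + δ := (tsub_add_cancel_of_le hlt.le).symm
    _ ≤ f K + δ := add_le_add_left hK.le _

lemma inner_approx (hh : Measurable h) (hη : Continuous η) (s : List ℕ)
    {ε : ℝ≥0∞} (hε : 0 < ε) :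
    ∃ C, MeasurableSet C ∧ C ⊆ h ⁻¹' (η '' cyl s) ∧
      μ (h ⁻¹' (η '' cyl s)) ≤ μ C + ε := by
  classical
  set E : Set (ℕ → ℕ) → Set T := fun S => h ⁻¹' (η '' S) with hE
  have hEmono : ∀ {S S' : Set (ℕ → ℕ)}, S ⊆ S' → E S ⊆ E S' :=
    fun hss => preimage_mono (image_mono hss)
  set δ : ℕ → ℝ≥0∞ := fun n => ε / 2 / 2 ^ n with hδdef
  have hδpos : ∀ n, 0 < δ n := by
    intro n
    apply ENNReal.div_pos
    · exact (ENNReal.div_pos hε.ne' ENNReal.ofNat_ne_top).ne'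
    · exact ENNReal.pow_ne_top ENNReal.ofNat_ne_top
  have hδsum : ∀ n, ∑ m ∈ Finset.range n, δ m ≤ ε := by
    intro n
    have h1 : ∑ m ∈ Finset.range n, δ m ≤ ∑' m, δ m := ENNReal.sum_le_tsum _
    have h2 : ∑' m, δ m = ε := by
      have : ∀ m, δ m = ε / 2 * (2⁻¹ : ℝ≥0∞) ^ m := by
        intro m
        simp only [hδdef, div_eq_mul_inv, ENNReal.inv_pow]
      rw [tsum_congr this, ENNReal.tsum_mul_left, ENNReal.tsum_geometric]
      rw [ENNReal.one_sub_inv_two, inv_inv, div_eq_mul_inv, mul_assoc,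
        ENNReal.inv_mul_cancel two_ne_zero ENNReal.ofNat_ne_top, mul_one]
    exact h2 ▸ h1
  have exK : ∀ (n : ℕ) (S : Set (ℕ → ℕ)),
      ∃ K, μ (E S) ≤ μ (E (S ∩ {σ | σ n ≤ K})) + δ n := by
    intro n S
    have hU : E S = ⋃ K, E (S ∩ {σ | σ n ≤ K}) := by
      have h1 : S = ⋃ K, (S ∩ {σ | σ n ≤ K}) := by
        ext σ
        simp only [mem_iUnion, mem_setOf_eq, mem_inter_iff]
        exact ⟨fun hσ => ⟨σ n, hσ, le_refl _⟩, fun ⟨K, hσ, _⟩ => hσ⟩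
      conv_lhs => rw [h1]
      simp only [hE, image_iUnion, preimage_iUnion]
    have hmono : Monotone fun K => E (S ∩ {σ | σ n ≤ K}) := by
      intro K K' hKK'
      exact hEmono (inter_subset_inter_right _ (fun σ hσ => le_trans hσ hKK'))
    have hsup : μ (E S) = ⨆ K, μ (E (S ∩ {σ | σ n ≤ K})) := by
      rw [hU]; exact hmono.directed_le.measure_iUnion
    exact exists_le_add (measure_ne_top μ _) hsup.le (hδpos n)
  let bnd : ℕ → Set (ℕ → ℕ) → ℕ := fun n S => (exK n S).choose
  let S : ℕ → Set (ℕ → ℕ) := fun n =>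
    Nat.rec (cyl s) (fun n Sn => Sn ∩ {σ | σ n ≤ bnd n Sn}) n
  let b : ℕ → ℕ := fun n => bnd n (S n)
  have hS0 : S 0 = cyl s := rfl
  have hSsucc : ∀ n, S (n + 1) = S n ∩ {σ | σ n ≤ b n} := fun n => rfl
  have hstep : ∀ n, μ (E (S n)) ≤ μ (E (S (n + 1))) + δ n :=
    fun n => (exK n (S n)).choose_spec
  have hchain : ∀ n, μ (E (S 0)) ≤ μ (E (S n)) + ∑ m ∈ Finset.range n, δ m := by
    intro n
    induction n with
    | zero => simp
    | succ n ih =>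
        calc μ (E (S 0)) ≤ μ (E (S n)) + ∑ m ∈ Finset.range n, δ m := ih
        _ ≤ (μ (E (S (n + 1))) + δ n) + ∑ m ∈ Finset.range n, δ m :=
            add_le_add_left (hstep n) _
        _ = μ (E (S (n + 1))) + ∑ m ∈ Finset.range (n + 1), δ m := by
            rw [Finset.sum_range_succ]; ring
  have hSanti : Antitone S := antitone_nat_of_succ_le fun n => by
    rw [hSsucc n]; exact inter_subset_left
  have hclS : ∀ n, IsClosed (S n) := by
    intro n
    induction n with
    | zero => exact isClosed_cyl s
    | succ n ih =>
        rw [hSsucc n]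
        have : {σ : ℕ → ℕ | σ n ≤ b n} = (fun σ : ℕ → ℕ => σ n) ⁻¹' (Iic (b n)) := rfl
        exact ih.inter (this ▸ (isClosed_discrete _).preimage (continuous_apply n))
  set F : ℕ → Set T := fun n => h ⁻¹' (closure (η '' S n)) with hFdef
  have hFmeas : ∀ n, MeasurableSet (F n) :=
    fun n => isClosed_closure.measurableSet.preimage hh
  have hFanti : Antitone F := fun n m hnm =>
    preimage_mono (closure_mono (image_mono (hSanti hnm)))
  have hEF : ∀ n, μ (E (S n)) ≤ μ (F n) :=
    fun n => measure_mono (preimage_mono subset_closure)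
  have hiInf : μ (⋂ n, F n) = ⨅ n, μ (F n) :=
    Directed.measure_iInter (fun n => (hFmeas n).nullMeasurableSet)
      hFanti.directed_ge ⟨0, measure_ne_top μ _⟩
  set K : Set (ℕ → ℕ) := ⋂ n, S n with hKdef
  have hKb : ∀ m, ∀ σ ∈ S (m + 1), σ m ≤ b m := by
    intro m σ hσ
    rw [hSsucc m] at hσ
    exact hσ.2
  have hKcpt : IsCompact K := by
    have hsub : K ⊆ univ.pi fun m => Iic (b m) := by
      intro σ hσ
      intro m _
      exact hKb m σ (mem_iInter.1 hσ (m + 1))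
    exact IsCompact.of_isClosed_subset
      (isCompact_univ_pi fun m => (finite_Iic (b m)).isCompact)
      (isClosed_iInter hclS) hsub
  set C : Set T := h ⁻¹' (η '' K) with hCdef
  have hCmeas : MeasurableSet C :=
    ((hKcpt.image hη).isClosed.measurableSet).preimage hh
  have hCsub : C ⊆ h ⁻¹' (η '' cyl s) := by
    rw [hCdef, ← hS0]
    exact hEmono (iInter_subset _ 0)
  have hFK : (⋂ n, F n) ⊆ C := by
    intro t ht
    have hz : ∀ n, h t ∈ closure (η '' S n) := fun n => mem_iInter.1 ht n
    rcases subset_image_iInter hη hSanti hclS hKb hz with ⟨σ, hσK, hσz⟩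
    exact ⟨σ, hσK, hσz⟩
  refine ⟨C, hCmeas, hCsub, ?_⟩
  have key : ∀ n, μ (h ⁻¹' (η '' cyl s)) ≤ μ (F n) + ε := by
    intro n
    calc μ (h ⁻¹' (η '' cyl s)) = μ (E (S 0)) := by rw [hS0]
    _ ≤ μ (E (S n)) + ∑ m ∈ Finset.range n, δ m := hchain n
    _ ≤ μ (F n) + ε := add_le_add (hEF n) (hδsum n)
  calc μ (h ⁻¹' (η '' cyl s)) ≤ (⨅ n, μ (F n)) + ε := by
        rw [ENNReal.iInf_add]
        exact le_iInf fun n => key n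
  _ = μ (⋂ n, F n) + ε := by rw [hiInf]
  _ ≤ μ C + ε := add_le_add_left (measure_mono hFK) _

lemma measurableSet_E (hc : μ.IsComplete) (hh : Measurable h)
    (hη : Continuous η) (s : List ℕ) :
    MeasurableSet (h ⁻¹' (η '' cyl s)) := by
  set A : Set T := h ⁻¹' (η '' cyl s) with hA
  have hex : ∀ m : ℕ, ∃ C, MeasurableSet C ∧ C ⊆ A ∧ μ A ≤ μ C + ((m : ℝ≥0∞))⁻¹ :=
    fun m => inner_approx μ hh hη s (ENNReal.inv_pos.2 (ENNReal.natCast_ne_top m))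
  choose C hCmeas hCsub hCle using hex
  set D : Set T := ⋃ m, C m with hD
  have hDmeas : MeasurableSet D := MeasurableSet.iUnion hCmeas
  have hDsub : D ⊆ A := iUnion_subset hCsub
  have hDfull : μ A ≤ μ D := by
    apply ENNReal.le_of_forall_pos_le_add
    intro e he _
    obtain ⟨m, hm⟩ := ENNReal.exists_inv_nat_lt (a := (e : ℝ≥0∞)) (by exact_mod_cast he.ne')
    calc μ A ≤ μ (C m) + ((m : ℝ≥0∞))⁻¹ := hCle m
    _ ≤ μ D + (e : ℝ≥0∞) := add_le_add (measure_mono (subset_iUnion C m)) hm.le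
  have hAD : μ A = μ D := le_antisymm hDfull (measure_mono hDsub)
  have hnull : μ (A \ D) = 0 := by
    have h1 : A \ D ⊆ toMeasurable μ A \ D :=
      diff_subset_diff_left (subset_toMeasurable μ A)
    have h2 : μ (toMeasurable μ A \ D) = 0 := by
      rw [measure_diff (hDsub.trans (subset_toMeasurable μ A))
        hDmeas.nullMeasurableSet (measure_ne_top μ D),
        measure_toMeasurable, hAD, tsub_self]
    exact measure_mono_null h1 h2
  have hAeq : A = D ∪ (A \ D) := (union_diff_cancel hDsub).symm
  rw [hAeq]
  exact hDmeas.union (hc.out _ hnull)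

end


lemma exists_repr {T W : Type*} [MeasurableSpace T] [MeasurableSpace W]
    {G : Set (T × W)} (hG : MeasurableSet G) :
    ∃ (h : T → (ℕ → ℕ)) (G' : Set ((ℕ → ℕ) × W)),
      Measurable h ∧ MeasurableSet G' ∧ G = (fun p => (h p.1, p.2)) ⁻¹' G' := by
  classical
  set P : Set (T × W) → Prop := fun G =>
    ∃ (h : T → (ℕ → ℕ)) (G' : Set ((ℕ → ℕ) × W)),
      Measurable h ∧ MeasurableSet G' ∧ G = (fun p : T × W => (h p.1, p.2)) ⁻¹' G'
    with hP
  let m : MeasurableSpace (T × W) :=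
    { MeasurableSet' := P
      measurableSet_empty := ⟨fun _ _ => 0, ∅, measurable_const, MeasurableSet.empty, by simp⟩
      measurableSet_compl := by
        rintro S ⟨h, G', mh, mG', rfl⟩
        exact ⟨h, G'ᶜ, mh, mG'.compl, rfl⟩
      measurableSet_iUnion := by
        intro f hf
        choose hs Gs mhs mGs hEq using hf
        set H : T → (ℕ → ℕ) := fun t n => hs (Nat.unpair n).1 t (Nat.unpair n).2 with hH
        have mH : Measurable H :=
          measurable_pi_lambda _ fun n =>
            (measurable_pi_apply _).comp (mhs (Nat.unpair n).1)
        set Ψ : ℕ → (ℕ → ℕ) → (ℕ → ℕ) := fun i x k => x (Nat.pair i k) with hΨ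
        have mΨ : ∀ i, Measurable (Ψ i) :=
          fun i => measurable_pi_lambda _ fun k => measurable_pi_apply _
        refine ⟨H, ⋃ i, (fun q : (ℕ → ℕ) × W => (Ψ i q.1, q.2)) ⁻¹' Gs i, mH,
          MeasurableSet.iUnion fun i =>
            ((mΨ i).comp measurable_fst |>.prodMk measurable_snd) (mGs i), ?_⟩
        ext ⟨t, w⟩
        have hcomp : ∀ i, Ψ i (H t) = hs i t := by
          intro i; funext k
          simp [hH, hΨ, Nat.unpair_pair]
        simp only [mem_iUnion, mem_preimage, hcomp]
        constructor
        · rintro ⟨i, hi⟩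
          exact ⟨i, by rw [hEq i] at hi; exact hi⟩
        · rintro ⟨i, hi⟩
          exact ⟨i, by rw [hEq i]; exact hi⟩ }
  have hle : (Prod.instMeasurableSpace : MeasurableSpace (T × W)) ≤ m := by
    rw [show (Prod.instMeasurableSpace : MeasurableSpace (T × W)) =
      MeasurableSpace.comap Prod.fst inferInstance ⊔
      MeasurableSpace.comap Prod.snd inferInstance from rfl]
    apply sup_le
    · rintro S ⟨A, hA, rfl⟩
      refine ⟨fun t _ => if t ∈ A then 1 else 0, {q | q.1 0 = 1},
        measurable_pi_lambda _ fun _ => Measurable.ite hA measurable_const measurable_const,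
        ((measurable_pi_apply 0).comp measurable_fst) (measurableSet_singleton 1), ?_⟩
      ext ⟨t, w⟩
      by_cases ht : t ∈ A <;> simp [ht]
    · rintro S ⟨B, hB, rfl⟩
      exact ⟨fun _ _ => 0, {q | q.2 ∈ B}, measurable_const,
        measurable_snd hB, rfl⟩
  exact hle _ hG


lemma core_sel {T : Type*} [MeasurableSpace T] (μ : Measure T) [IsFiniteMeasure μ]
    (hc : μ.IsComplete) (G : Set (T × (ℕ → ℝ))) (hG : MeasurableSet G)
    (hne : ∀ t, ∃ y, (t, y) ∈ G) :
    ∃ g : T → ℕ → ℝ, Measurable g ∧ ∀ t, (t, g t) ∈ G := by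
  classical
  obtain ⟨h, G', mh, mG', hGeq⟩ := exists_repr hG
  rcases isEmpty_or_nonempty T with hT | hT
  · exact ⟨fun _ _ => 0, measurable_const, fun t => (hT.false t).elim⟩
  obtain ⟨t0⟩ := id hT
  have hG'ne : G'.Nonempty := by
    obtain ⟨y, hy⟩ := hne t0
    rw [hGeq] at hy
    exact ⟨(h t0, y), hy⟩
  have han : AnalyticSet G' := mG'.analyticSet
  rw [analyticSet_iff_exists_polishSpace_range] at han
  obtain ⟨β, tβ, pβ, ψ, hψc, hψr⟩ := han
  haveI : Nonempty β := by
    rcases hG'ne with ⟨z, hz⟩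
    rw [← hψr] at hz
    rcases hz with ⟨b, _⟩
    exact ⟨b⟩
  obtain ⟨θ, hθc, hθs⟩ := PolishSpace.exists_nat_nat_continuous_surjective β
  set ξ : (ℕ → ℕ) → (ℕ → ℕ) × (ℕ → ℝ) := ψ ∘ θ with hξdef
  have hξc : Continuous ξ := hψc.comp hθc
  have hξr : range ξ = G' := by
    rw [hξdef, range_comp, hθs.range_eq, image_univ, hψr]
  set η : (ℕ → ℕ) → (ℕ → ℕ) := fun σ => (ξ σ).1 with hηdef
  have hηc : Continuous η := continuous_fst.comp hξc
  set E : List ℕ → Set T := fun l => h ⁻¹' (η '' cyl l) with hEdef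
  have hEmeas : ∀ l, MeasurableSet (E l) := fun l => measurableSet_E μ hc mh hηc l
  have hE0 : ∀ t, t ∈ E [] := by
    intro t
    obtain ⟨y, hy⟩ := hne t
    rw [hGeq] at hy
    rw [← hξr] at hy
    rcases hy with ⟨σ, hσ⟩
    exact ⟨σ, fun i hi => absurd hi (by simp), by rw [hηdef]; simp only [hσ]⟩
  have hEU : ∀ l, E l = ⋃ k, E (l ++ [k]) := by
    intro l
    show h ⁻¹' (η '' cyl l) = ⋃ k, E (l ++ [k])
    conv_lhs => rw [cyl_concat l]
    simp only [image_iUnion, preimage_iUnion]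
    rfl
  -- recursive construction
  set nxt : T → List ℕ → ℕ :=
    fun t l => if hk : ∃ k, t ∈ E (l ++ [k]) then Nat.find hk else 0 with hnxtdef
  set L : T → ℕ → List ℕ :=
    fun t n => Nat.rec [] (fun _ ih => ih ++ [nxt t ih]) n with hLdef
  have hLsucc : ∀ t n, L t (n + 1) = L t n ++ [nxt t (L t n)] := fun t n => rfl
  have hmem : ∀ t n, t ∈ E (L t n) := by
    intro t n
    induction n with
    | zero => exact hE0 t
    | succ n ih =>
        have hex : ∃ k, t ∈ E (L t n ++ [k]) := by
          rw [hEU (L t n)] at ih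
          exact mem_iUnion.1 ih
        rw [hLsucc]
        have heq : nxt t (L t n) = Nat.find hex := by rw [hnxtdef]; exact dif_pos hex
        rw [heq]
        exact Nat.find_spec hex
  have hlen : ∀ t n, (L t n).length = n := by
    intro t n
    induction n with
    | zero => rfl
    | succ n ih => rw [hLsucc]; simp [ih]
  set σf : T → ℕ → ℕ := fun t m => nxt t (L t m) with hσfdef
  have hcoord : ∀ t n i, i < n → (L t n)[i]? = some (σf t i) := by
    intro t n
    induction n with
    | zero => intro i hi; exact absurd hi (Nat.not_lt_zero i)
    | succ n ih =>
        intro i hi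
        rcases Nat.lt_succ_iff_lt_or_eq.1 hi with hlt | heq
        · have h1 : i < (L t n).length := by rw [hlen]; exact hlt
          rw [hLsucc, List.getElem?_append_left h1]
          exact ih i hlt
        · rw [hLsucc]
          have h2 : (L t n).length = i := by rw [hlen]; omega
          rw [← h2, List.getElem?_concat_length, h2, heq]
  have hησ : ∀ t, η (σf t) = h t := by
    intro t
    have hτ : ∀ n, ∃ τ ∈ cyl (L t n), η τ = h t := fun n => hmem t n
    choose τ hτc hτe using hτ
    have hconv : Tendsto τ atTop (𝓝 (σf t)) := by
      rw [tendsto_pi_nhds]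
      intro m
      have hev : ∀ᶠ n in atTop, τ n m = σf t m := by
        rw [eventually_atTop]
        refine ⟨m + 1, fun n hn => ?_⟩
        have hm : m < (L t n).length := by rw [hlen]; omega
        have h1 := hτc n m hm
        have h2 := hcoord t n m (by omega)
        rw [List.getElem?_eq_getElem hm] at h2
        rw [h1]
        exact Option.some_injective _ h2
      exact Tendsto.congr' (hev.mono fun n hn => hn.symm) tendsto_const_nhds
    have h1 : Tendsto (fun n => η (τ n)) atTop (𝓝 (η (σf t))) :=
      (hηc.tendsto _).comp hconv
    have h2 : Tendsto (fun n => η (τ n)) atTop (𝓝 (h t)) := by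
      apply Tendsto.congr' _ tendsto_const_nhds
      exact Eventually.of_forall fun n => (hτe n).symm
    exact tendsto_nhds_unique h1 h2
  -- measurability
  have hnxtMeas : ∀ l k, MeasurableSet {t | nxt t l = k} := by
    intro l k
    set A : ℕ → Set T := fun j => E (l ++ [j]) with hAdef
    have hset : {t | nxt t l = k} =
        ((⋃ j, A j) ∩ A k ∩ ⋂ j, ⋂ (_ : j < k), (A j)ᶜ) ∪
          ((⋂ j, (A j)ᶜ) ∩ (if k = 0 then univ else ∅)) := by
      ext t
      by_cases hex : ∃ j, t ∈ A j
      · have : nxt t l = Nat.find hex := by rw [hnxtdef]; exact dif_pos hex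
        simp only [mem_setOf_eq, this, mem_union, mem_inter_iff, mem_iUnion, mem_iInter,
          mem_compl_iff]
        constructor
        · intro hfind
          left
          rw [← hfind]
          exact ⟨⟨hex, Nat.find_spec hex⟩, fun j hj => Nat.find_min hex hj⟩
        · rintro (⟨⟨_, hAk⟩, hmin⟩ | ⟨hall, _⟩)
          · exact le_antisymm (Nat.find_min' hex hAk)
              (Nat.le_of_not_lt fun hlt => hmin _ hlt (Nat.find_spec hex))
          · exact absurd hex (by push_neg; exact hall)
      · have : nxt t l = 0 := by rw [hnxtdef]; exact dif_neg hex
        simp only [mem_setOf_eq, this, mem_union, mem_inter_iff, mem_iUnion, mem_iInter,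
          mem_compl_iff]
        constructor
        · intro h0
          right
          refine ⟨fun j hj => hex ⟨j, hj⟩, ?_⟩
          rw [if_pos h0.symm]
          trivial
        · rintro (⟨⟨hj, _⟩, _⟩ | ⟨_, hk⟩)
          · exact absurd hj hex
          · by_cases hk0 : k = 0
            · exact hk0.symm
            · rw [if_neg hk0] at hk
              exact hk.elim
    rw [hset]
    refine MeasurableSet.union ?_ ?_
    · exact ((MeasurableSet.iUnion fun j => hEmeas _).inter (hEmeas _)).inter
        (MeasurableSet.iInter fun j => MeasurableSet.iInter fun _ => (hEmeas _).compl)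
    · refine (MeasurableSet.iInter fun j => (hEmeas _).compl).inter ?_
      split_ifs
      · exact MeasurableSet.univ
      · exact MeasurableSet.empty
  have hLMeas : ∀ n l, MeasurableSet {t | L t n = l} := by
    intro n
    induction n with
    | zero =>
        intro l
        by_cases hl : l = []
        · subst hl
          have : {t : T | L t 0 = []} = univ := by
            ext t
            simp only [mem_setOf_eq, mem_univ, iff_true]
            rfl
          rw [this]; exact MeasurableSet.univ
        · have : {t : T | L t 0 = l} = ∅ := by
            ext t
            simp only [mem_setOf_eq, mem_empty_iff_false, iff_false]
            exact fun hh => hl hh.symm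
          rw [this]; exact MeasurableSet.empty
    | succ n ih =>
        intro l
        have hset : {t | L t (n + 1) = l} =
            ⋃ (l' : List ℕ), ⋃ (k : ℕ),
              if l' ++ [k] = l then {t | L t n = l'} ∩ {t | nxt t l' = k} else ∅ := by
          ext t
          simp only [mem_setOf_eq, mem_iUnion]
          constructor
          · intro hL
            refine ⟨L t n, nxt t (L t n), ?_⟩
            rw [if_pos (by rw [← hLsucc]; exact hL)]
            exact ⟨rfl, rfl⟩
          · rintro ⟨l', k, hmem'⟩
            by_cases hcond : l' ++ [k] = l
            · rw [if_pos hcond] at hmem'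
              rcases hmem' with ⟨h1, h2⟩
              rw [hLsucc, h1, h2, hcond]
            · rw [if_neg hcond] at hmem'
              exact hmem'.elim
        rw [hset]
        refine MeasurableSet.iUnion fun l' => MeasurableSet.iUnion fun k => ?_
        split_ifs
        · exact (ih l').inter (hnxtMeas l' k)
        · exact MeasurableSet.empty
  have hσfMeas : Measurable σf := by
    apply measurable_pi_lambda
    intro n
    apply measurable_to_countable'
    intro k
    have hset : (fun t => σf t n) ⁻¹' {k} =
        ⋃ (l : List ℕ), {t | L t n = l} ∩ {t | nxt t l = k} := by
      ext t
      simp only [mem_preimage, mem_singleton_iff, mem_iUnion, mem_inter_iff, mem_setOf_eq]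
      constructor
      · intro hk
        exact ⟨L t n, rfl, hk⟩
      · rintro ⟨l, h1, h2⟩
        rw [hσfdef]
        simp only
        rw [h1]
        exact h2
    rw [hset]
    exact MeasurableSet.iUnion fun l => (hLMeas n l).inter (hnxtMeas l k)
  refine ⟨fun t => (ξ (σf t)).2, (continuous_snd.comp hξc).measurable.comp hσfMeas, ?_⟩
  intro t
  rw [hGeq]
  show (h t, (ξ (σf t)).2) ∈ G'
  have : (h t, (ξ (σf t)).2) = ξ (σf t) := by
    rw [Prod.ext_iff]
    exact ⟨(hησ t).symm, rfl⟩
  rw [this, ← hξr]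
  exact mem_range_self _


lemma exists_embedding (E : Type*) [NormedAddCommGroup E] [NormedSpace ℝ E]
    [TopologicalSpace.SeparableSpace E]
    [MeasurableSpace (WeakDual ℝ E)] [BorelSpace (WeakDual ℝ E)] :
    ∃ ι : WeakDual ℝ E → (ℕ → ℝ), MeasurableEmbedding ι := by
  have : Nonempty E := ⟨0⟩
  obtain ⟨u, hu⟩ := TopologicalSpace.exists_dense_seq E
  set ι : WeakDual ℝ E → (ℕ → ℝ) := fun p n => p (u n) with hι
  have hιc : Continuous ι :=
    continuous_pi fun n => WeakDual.eval_continuous (u n)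
  have hιinj : Function.Injective ι := by
    intro p q hpq
    have hfun : (⇑p : E → ℝ) = ⇑q := by
      apply Continuous.ext_on (hu : Dense (range u)) (map_continuous p) (map_continuous q)
      rintro x hx
      rcases hx with ⟨n, rfl⟩
      exact congrFun hpq n
    exact DFunLike.coe_injective hfun
  set B : ℕ → Set (WeakDual ℝ E) :=
    fun n => ⇑WeakDual.toStrongDual ⁻¹' Metric.closedBall 0 n with hB
  have hBcpt : ∀ n, IsCompact (B n) := fun n => WeakDual.isCompact_closedBall (𝕜 := ℝ) (E := E) 0 n
  have hBcover : ∀ p : WeakDual ℝ E, ∃ n, p ∈ B n := by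
    intro p
    obtain ⟨n, hn⟩ := exists_nat_ge ‖WeakDual.toStrongDual p‖
    exact ⟨n, by simpa [hB, Metric.mem_closedBall, dist_zero_right] using hn⟩
  have hemb : ∀ n : ℕ, MeasurableEmbedding fun p : B n => ι p.val := by
    intro n
    haveI : CompactSpace (B n) := isCompact_iff_compactSpace.1 (hBcpt n)
    have hc : Continuous fun p : B n => ι p.val := hιc.comp continuous_subtype_val
    have hinj : Function.Injective fun p : B n => ι p.val :=
      fun a b hab => Subtype.ext (hιinj hab)
    exact (hc.isClosedEmbedding hinj).measurableEmbedding
  refine ⟨ι, hιinj, hιc.measurable, ?_⟩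
  intro S hS
  have himg : ι '' S = ⋃ n, (fun p : B n => ι p.val) '' (Subtype.val ⁻¹' S) := by
    ext y
    constructor
    · rintro ⟨p, hpS, rfl⟩
      obtain ⟨n, hn⟩ := hBcover p
      exact mem_iUnion.2 ⟨n, ⟨⟨p, hn⟩, hpS, rfl⟩⟩
    · intro hy
      rcases mem_iUnion.1 hy with ⟨n, ⟨p, hpS, rfl⟩⟩
      exact ⟨p.val, hpS, rfl⟩
  rw [himg]
  exact MeasurableSet.iUnion fun n =>
    (hemb n).measurableSet_image' (hS.preimage measurable_subtype_coe)


end Stmt11Aux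

open Stmt11Aux

/-- `(T,Σ,μ)` complete finite measure space, `E` separable Banach,
`Γ : T ⇉ E*` an integrably bounded multifunction with nonempty values and graph in
`Σ ⊗ Borel(E*, w*)`. Then the set of Gelfand integrable selectors of `Γ` is nonempty:
there is a (weak* Borel) measurable a.e. selector that is Gelfand integrable. -/
theorem stmt11 {T : Type*} [MeasurableSpace T] (μ : Measure T) [IsFiniteMeasure μ]
    (hcomplete : μ.IsComplete)
    {E : Type*} [NormedAddCommGroup E] [NormedSpace ℝ E] [CompleteSpace E]
    [TopologicalSpace.SeparableSpace E]
    [MeasurableSpace (WeakDual ℝ E)] [BorelSpace (WeakDual ℝ E)]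
    (Γ : T → Set (WeakDual ℝ E)) (hne : ∀ t, (Γ t).Nonempty)
    (φ : T → ℝ) (hφ : Integrable φ μ)
    (hbd : ∀ t, ∀ p ∈ Γ t, ∀ y : E, |p y| ≤ φ t * ‖y‖)
    (hgraph : MeasurableSet {q : T × WeakDual ℝ E | q.2 ∈ Γ q.1}) :
    ∃ f : T → WeakDual ℝ E, Measurable f ∧ (∀ᵐ t ∂μ, f t ∈ Γ t) ∧
      ∀ y : E, Integrable (fun t => f t y) μ := by
  classical
  obtain ⟨ι, hι⟩ := exists_embedding E
  set G : Set (T × WeakDual ℝ E) := {q | q.2 ∈ Γ q.1} with hGdef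
  set G₂ : Set (T × (ℕ → ℝ)) := (fun q : T × WeakDual ℝ E => (q.1, ι q.2)) '' G with hG₂
  have hmap : MeasurableEmbedding fun q : T × WeakDual ℝ E => (q.1, ι q.2) :=
    MeasurableEmbedding.id.prodMap hι
  have hG₂meas : MeasurableSet G₂ := hmap.measurableSet_image' hgraph
  have hG₂ne : ∀ t, ∃ y, (t, y) ∈ G₂ := by
    intro t
    obtain ⟨p, hp⟩ := hne t
    exact ⟨ι p, ⟨(t, p), hp, rfl⟩⟩
  obtain ⟨g, hgmeas, hgsel⟩ := core_sel μ hcomplete G₂ hG₂meas hG₂ne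
  have hsel : ∀ t, ∃ p ∈ Γ t, g t = ι p := by
    intro t
    rcases hgsel t with ⟨⟨t', p⟩, hpG, heq⟩
    rcases Prod.ext_iff.1 heq with ⟨h1, h2⟩
    refine ⟨p, ?_, h2.symm⟩
    rw [Prod.mk.injEq] at heq
    have : t' = t := h1
    rw [← this]
    exact hpG
  set f : T → WeakDual ℝ E := fun t => Function.invFun ι (g t) with hfdef
  have hfsel : ∀ t, f t ∈ Γ t := by
    intro t
    obtain ⟨p, hp, hgt⟩ := hsel t
    have : f t = p := by
      rw [hfdef]
      simp only
      rw [hgt]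
      exact Function.leftInverse_invFun hι.injective p
    rw [this]
    exact hp
  have hfmeas : Measurable f := by
    intro S hS
    have hpre : f ⁻¹' S = g ⁻¹' (ι '' S) := by
      ext t
      obtain ⟨p, _, hgt⟩ := hsel t
      have hft : f t = p := by
        rw [hfdef]; simp only; rw [hgt]
        exact Function.leftInverse_invFun hι.injective p
      simp only [mem_preimage, hft, hgt]
      exact ⟨fun hpS => ⟨p, hpS, rfl⟩, fun ⟨p', hp'S, hp'e⟩ => (hι.injective hp'e) ▸ hp'S⟩
    rw [hpre]
    exact hgmeas (hι.measurableSet_image.2 hS)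
  refine ⟨f, hfmeas, Eventually.of_forall hfsel, ?_⟩
  intro y
  have hmeas : Measurable fun t => f t y :=
    (WeakDual.eval_continuous y).measurable.comp hfmeas
  refine Integrable.mono' (hφ.mul_const ‖y‖) hmeas.aestronglyMeasurable ?_
  refine Eventually.of_forall fun t => ?_
  rw [Real.norm_eq_abs]
  exact hbd t (f t) (hfsel t) y
end
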